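/- arXiv:2310.10241 — 3 statements merged into one kernel-verified Lean document; each statement's English description precedes it below -/
import Mathlib

section
/- Let (d_i)_{i≥0} be a sequence of positive integers such that d_0 = 1 and 1 ≤ d_{i+1} ≤ d_i^⟨i⟩ for all i ≥ 1. Then there exists an abelian semigroup G and a subset A ⊆ G such that d_h = |hA| for all h ≥ 0, where hA denotes the h-fold iterated sumset (with 0A a singleton). -/
open scoped Pointwise

/-- `macaulay h a` is the Macaulay operator `a ↦ a^⟨h⟩`, computed via the greedy
construction of the `h`-binomial representation of `a`: writing
`a = C(a_h,h) + C(a_{h-1},h-1) + ⋯ + C(a_1,1)` with `a_h > a_{h-1} > ⋯ > a_1 ≥ 0`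
(where `a_h` is the largest integer with `C(a_h,h) ≤ a`, and so on), one sets
`a^⟨h⟩ = C(a_h+1,h+1) + C(a_{h-1}+1,h) + ⋯ + C(a_1+1,2)`, and `0^⟨h⟩ = 0`. -/
def macaulay : ℕ → ℕ → ℕ
  | 0, _ => 0
  | h + 1, a =>
    if a = 0 then 0
    else
      let m := Nat.findGreatest (fun k => Nat.choose k (h + 1) ≤ a) (a + h + 1)
      Nat.choose (m + 1) (h + 2) + macaulay h (a - Nat.choose m (h + 1))

/-- The `h`-fold iterated sumset `hA = A + ⋯ + A` (`h` summands), for `h ≥ 1`.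
(The value at `h = 0` is irrelevant; it is set to `A` by convention.) -/
def iterSumset {G : Type*} [AddCommSemigroup G] (A : Set G) : ℕ → Set G
  | 0 => A
  | 1 => A
  | h + 2 => iterSumset A (h + 1) + A

/-!
Read `u : Fin n → ℕ`, with `n = d 1`, as the exponent vector of a monomial in `x₀, …, xₙ₋₁`, and
let `segment d` consist, in each degree `h`, of the `d h` lexicographically smallest monomials
(`x₀` most significant). Multiplying by the smallest variable `xₙ₋₁` acts on lex ranks in degree
`h` exactly as `a ↦ a^⟨h⟩`, so Macaulay's bound `d (h + 1) ≤ (d h)^⟨h⟩` makes the complement of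
the segment a monomial ideal. A monomial outside the segment is pushed into it by repeatedly
trading one factor of its largest variable `xₚ` for `xₚ₊₁`; since the complement is an ideal,
this normal form satisfies `NF (NF u · v) = NF (u · v)`, so the segment with `u ⊕ v = NF (u v)`
is a commutative semigroup. For `A` the set of variables, `hA` is the degree-`h` part of the
segment, which has `d h` elements.
-/

namespace MacaulaySemigroup

open Finset

lemma multichoose_succ_eq_sum (n D : ℕ) :
    (n + 1).multichoose D = ∑ c ∈ range (D + 1), n.multichoose (D - c) := by
  have := sum_range_reflect (fun c => n.multichoose c) (D + 1)
  simp only [Nat.add_sub_cancel] at this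
  rw [this, Nat.sum_range_multichoose, Nat.multichoose_eq, Nat.add_right_comm, Nat.add_sub_cancel,
    add_comm D n, Nat.choose_symm_add]

lemma lt_multichoose {h : ℕ} (hh : 1 ≤ h) (b : ℕ) : b < (b + 1).multichoose h := by
  rw [Nat.multichoose_eq, Nat.add_right_comm, Nat.add_sub_cancel, ← Nat.choose_symm_add]
  calc b < (b + 1).choose b := by simp
    _ ≤ (b + h).choose b := Nat.choose_le_choose b (by omega)

lemma sub_le_choose_succ (b k : ℕ) : b - k ≤ b.choose (k + 1) := by
  induction b with
  | zero => simp
  | succ b ih =>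
    rcases le_or_gt b k with hb | hb
    · rcases eq_or_lt_of_le hb with rfl | hb
      · simp
      · omega
    · have := Nat.choose_pos (show k ≤ b by omega)
      rw [Nat.choose_succ_succ']
      omega

lemma macaulay_zero_right (h : ℕ) : macaulay h 0 = 0 := by
  cases h <;> simp [macaulay]

lemma macaulay_choose_add {m b R : ℕ} (hR : R < b.choose m) :
    macaulay (m + 1) (b.choose (m + 1) + R) = (b + 1).choose (m + 2) + macaulay m R := by
  have hmb : m ≤ b := by
    by_contra! h
    simp [Nat.choose_eq_zero_of_lt h] at hR
  rcases eq_or_lt_of_le hmb with rfl | hmb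
  · simp_all [Nat.choose_succ_self, macaulay_zero_right]
  set a := b.choose (m + 1) + R
  have ha : a ≠ 0 := by have := Nat.choose_pos (show m + 1 ≤ b by omega); omega
  have hgreatest : Nat.findGreatest (fun k => k.choose (m + 1) ≤ a) (a + m + 1) = b := by
    refine Nat.findGreatest_eq_iff.mpr ⟨?_, fun _ => by omega, fun j hbj _ => ?_⟩
    · have := sub_le_choose_succ b m
      omega
    · refine not_le.mpr ?_
      calc a < (b + 1).choose (m + 1) := by rw [Nat.choose_succ_succ']; omega
          _ ≤ j.choose (m + 1) := Nat.choose_le_choose _ hbj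
  simp only [macaulay, ha, if_false, hgreatest]
  congr 2
  omega

lemma macaulay_multichoose_add {n k R : ℕ} (hn : 1 ≤ n) (hR : R < (n + 1).multichoose k) :
    macaulay (k + 1) (n.multichoose (k + 1) + R) = n.multichoose (k + 2) + macaulay k R := by
  have hk1 : n.multichoose (k + 1) = (n + k).choose (k + 1) := by
    rw [Nat.multichoose_eq]; congr 1
  have hk2 : n.multichoose (k + 2) = (n + k + 1).choose (k + 2) := by
    rw [Nat.multichoose_eq]; congr 1
  have hk : (n + 1).multichoose k = (n + k).choose k := by
    rw [Nat.multichoose_eq]; congr 1; omega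
  rw [hk1, hk2, macaulay_choose_add (hk ▸ hR)]

lemma macaulay_sum_multichoose_add {n : ℕ} (hn : 1 ≤ n) {e h R : ℕ} (he : e ≤ h)
    (hR : R < n.multichoose (h - e)) :
    macaulay h (∑ c ∈ range e, n.multichoose (h - c) + R) =
      ∑ c ∈ range e, n.multichoose (h + 1 - c) + macaulay (h - e) R := by
  induction e generalizing h with
  | zero => simp
  | succ e ih =>
    obtain ⟨k, rfl⟩ : ∃ k, h = k + 1 := ⟨h - 1, by omega⟩
    simp only [Nat.add_sub_add_right] at hR ⊢
    have hrest : ∑ c ∈ range e, n.multichoose (k - c) + R < (n + 1).multichoose k := by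
      rw [multichoose_succ_eq_sum]
      calc _ < ∑ c ∈ range (e + 1), n.multichoose (k - c) := by rw [sum_range_succ]; omega
        _ ≤ _ := sum_le_sum_of_subset (range_subset_range.mpr (by omega))
    rw [sum_range_succ', sum_range_succ']
    simp only [Nat.add_sub_add_right, Nat.sub_zero]
    rw [add_right_comm, add_comm _ (n.multichoose (k + 1)), macaulay_multichoose_add hn hrest,
      ih (by omega) hR]
    ring

lemma macaulay_multichoose {n h : ℕ} (hn : 1 ≤ n) (hh : 1 ≤ h) :
    macaulay h (n.multichoose h) = n.multichoose (h + 1) := by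
  have := macaulay_sum_multichoose_add hn (e := 1) (R := 0) hh
    (by rw [Nat.multichoose_eq]; exact Nat.choose_pos (by omega))
  simpa [macaulay_zero_right] using this

section Rank

variable {n : ℕ}

def deg (u : Fin n → ℕ) : ℕ := ∑ i, u i

lemma deg_add (u v : Fin n → ℕ) : deg (u + v) = deg u + deg v := sum_add_distrib

lemma deg_single (j : Fin n) (a : ℕ) : deg (Pi.single j a) = a := by simp [deg]

lemma deg_eq_zero_iff {u : Fin n → ℕ} : deg u = 0 ↔ u = 0 := by
  simp [deg, sum_eq_zero_iff, funext_iff]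

lemma apply_le_deg (u : Fin n → ℕ) (i : Fin n) : u i ≤ deg u :=
  single_le_sum (fun j _ => Nat.zero_le (u j)) (mem_univ i)

lemma deg_tail (u : Fin (n + 1) → ℕ) : deg (Fin.tail u) = deg u - u 0 := by
  simp only [deg, Fin.sum_univ_succ u, Fin.tail]
  omega

/-- The position of `u` among the vectors of degree `deg u` listed in increasing lexicographic
order (coordinate `0` most significant): the `c`-th summand counts those with first coordinate
`c`. -/
def rank : {n : ℕ} → (Fin n → ℕ) → ℕ
  | 0, _ => 0
  | n + 1, u => ∑ c ∈ range (u 0), n.multichoose (deg u - c) + rank (Fin.tail u)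

lemma rank_succ (u : Fin (n + 1) → ℕ) :
    rank u = ∑ c ∈ range (u 0), n.multichoose (deg u - c) + rank (Fin.tail u) := rfl

lemma rank_lt_multichoose : ∀ {n : ℕ} (u : Fin n → ℕ), rank u < n.multichoose (deg u)
  | 0, u => by simp [rank, deg]
  | n + 1, u => by
    have htail := rank_lt_multichoose (Fin.tail u)
    rw [deg_tail] at htail
    calc rank u < ∑ c ∈ range (u 0 + 1), n.multichoose (deg u - c) := by
          rw [sum_range_succ, rank_succ]; omega
      _ ≤ ∑ c ∈ range (deg u + 1), n.multichoose (deg u - c) :=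
        sum_le_sum_of_subset (range_subset_range.mpr (by have := apply_le_deg u 0; omega))
      _ = _ := (multichoose_succ_eq_sum n (deg u)).symm

lemma rank_lt_sum_range_succ (u : Fin (n + 1) → ℕ) :
    rank u < ∑ c ∈ range (u 0 + 1), n.multichoose (deg u - c) := by
  have := rank_lt_multichoose (Fin.tail u)
  rw [deg_tail] at this
  rw [sum_range_succ, rank_succ]
  omega

lemma rank_lt_rank_of_toLex_lt :
    ∀ {n : ℕ} {u v : Fin n → ℕ}, deg u = deg v → toLex u < toLex v → rank u < rank v
  | 0, _, _, _, ⟨i, _⟩ => i.elim0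
  | n + 1, u, v, hdeg, hlt => by
    rw [← Fin.cons_self_tail u, ← Fin.cons_self_tail v] at hlt
    rcases (Fin.pi_lex_lt_cons_cons (s := (· < ·))).mp hlt with h0 | ⟨h0, htail⟩
    · calc rank u < ∑ c ∈ range (u 0 + 1), n.multichoose (deg u - c) :=
            rank_lt_sum_range_succ u
        _ ≤ ∑ c ∈ range (v 0), n.multichoose (deg u - c) :=
          sum_le_sum_of_subset (range_subset_range.mpr h0)
        _ ≤ rank v := by rw [rank_succ, hdeg]; omega
    · have := rank_lt_rank_of_toLex_lt (u := Fin.tail u) (v := Fin.tail v)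
        (by rw [deg_tail, deg_tail, hdeg, h0]) htail
      rw [rank_succ, rank_succ, hdeg, h0]
      omega

lemma rank_le_rank_of_toLex_le {u v : Fin n → ℕ} (hdeg : deg u = deg v)
    (h : toLex u ≤ toLex v) : rank u ≤ rank v := by
  rcases h.lt_or_eq with h | h
  · exact (rank_lt_rank_of_toLex_lt hdeg h).le
  · rw [toLex_inj.mp h]

lemma toLex_le_of_rank_le {u v : Fin n → ℕ} (hdeg : deg u = deg v) (h : rank u ≤ rank v) :
    toLex u ≤ toLex v :=
  not_lt.mp fun hvu => (rank_lt_rank_of_toLex_lt hdeg.symm hvu).not_ge h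

lemma eq_of_rank_eq {u v : Fin n → ℕ} (hdeg : deg u = deg v) (h : rank u = rank v) : u = v :=
  toLex_inj.mp ((toLex_le_of_rank_le hdeg h.le).antisymm (toLex_le_of_rank_le hdeg.symm h.ge))

lemma rank_add_le_rank_add {u v : Fin n → ℕ} (hdeg : deg u = deg v) (h : rank u ≤ rank v)
    (w : Fin n → ℕ) : rank (u + w) ≤ rank (v + w) :=
  rank_le_rank_of_toLex_le (by rw [deg_add, deg_add, hdeg])
    (add_le_add_left (toLex_le_of_rank_le hdeg h) (toLex w))

lemma exists_deg_rank_eq : ∀ {n h a : ℕ}, a < n.multichoose h →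
    ∃ u : Fin n → ℕ, deg u = h ∧ rank u = a
  | 0, 0, a, ha => ⟨0, by simp [deg], by simp at ha; simp [rank, ha]⟩
  | 0, _ + 1, _, ha => by simp at ha
  | n + 1, h, a, ha => by
    rw [multichoose_succ_eq_sum] at ha
    have hex : ∃ e, a < ∑ c ∈ range (e + 1), n.multichoose (h - c) := ⟨h, ha⟩
    obtain ⟨e, hea, hmin⟩ : ∃ e, a < ∑ c ∈ range (e + 1), n.multichoose (h - c) ∧
        ∀ e' < e, ¬ a < ∑ c ∈ range (e' + 1), n.multichoose (h - c) :=
      ⟨Nat.find hex, Nat.find_spec hex, fun _ => Nat.find_min hex⟩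
    have heh : e ≤ h := not_lt.mp fun hhe => hmin h hhe ha
    have hle : ∑ c ∈ range e, n.multichoose (h - c) ≤ a := by
      rcases e with _ | e
      · simp
      · exact not_lt.mp (hmin e (by omega))
    have hlt : a - ∑ c ∈ range e, n.multichoose (h - c) < n.multichoose (h - e) := by
      rw [sum_range_succ] at hea
      omega
    obtain ⟨t, ht, hrt⟩ := exists_deg_rank_eq hlt
    have hdeg : deg (Fin.cons e t : Fin (n + 1) → ℕ) = h := by
      rw [deg, Fin.sum_univ_succ]
      simp only [Fin.cons_zero, Fin.cons_succ]
      rw [← deg, ht]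
      omega
    refine ⟨Fin.cons e t, hdeg, ?_⟩
    rw [rank_succ, Fin.cons_zero, Fin.tail_cons, hdeg, hrt]
    omega

lemma rank_eq_zero :
    ∀ {n : ℕ} {u : Fin n → ℕ}, (∀ i : Fin n, i.val + 1 < n → u i = 0) → rank u = 0
  | 0, _, _ => rfl
  | n + 1, u, hu => by
    have hsum : ∑ c ∈ range (u 0), n.multichoose (deg u - c) = 0 := by
      refine sum_eq_zero fun c hc => ?_
      rw [mem_range] at hc
      rcases n with _ | n
      · obtain ⟨k, hk⟩ : ∃ k, deg u - c = k + 1 := ⟨deg u - c - 1, by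
          have := apply_le_deg u 0; omega⟩
        rw [hk, Nat.multichoose_zero_succ]
      · simp [hu 0 (by simp)] at hc
    rw [rank_succ, hsum, rank_eq_zero (u := Fin.tail u) fun i hi => hu i.succ (by simpa using hi)]

lemma rank_add_single_last : ∀ {n : ℕ} (u : Fin (n + 1) → ℕ),
    rank (u + Pi.single (Fin.last n) 1) = macaulay (deg u) (rank u)
  | 0, u => by rw [rank_eq_zero (by simp), rank_eq_zero (by simp), macaulay_zero_right]
  | n + 1, u => by
    have h0 : (u + Pi.single (Fin.last (n + 1)) 1 : Fin (n + 2) → ℕ) 0 = u 0 := by simp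
    have htail : Fin.tail (u + Pi.single (Fin.last (n + 1)) 1) =
        Fin.tail u + Pi.single (Fin.last n) 1 := by
      ext i
      simp [Fin.tail, Pi.single_apply, ← Fin.succ_last]
    have hrank := rank_lt_multichoose (Fin.tail u)
    rw [deg_tail] at hrank
    rw [rank_succ, rank_succ u, h0, htail, rank_add_single_last, deg_add, deg_single, deg_tail,
      macaulay_sum_multichoose_add (by omega) (apply_le_deg u 0) hrank]

lemma macaulay_mono (h : ℕ) : Monotone (macaulay h) := by
  intro a b hab
  rcases Nat.eq_zero_or_pos h with rfl | hh
  · simp [macaulay]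
  -- Realise `a ≤ b` as ranks in degree `h` with `b + 1` variables; adding the last variable
  -- preserves the lex order.
  obtain ⟨u, hu, rfl⟩ := exists_deg_rank_eq (n := b + 1) (hab.trans_lt (lt_multichoose hh b))
  obtain ⟨v, hv, hvb⟩ := exists_deg_rank_eq (n := b + 1) (lt_multichoose hh b)
  have := rank_add_le_rank_add (hu.trans hv.symm) (by omega) (Pi.single (Fin.last b) 1)
  rwa [rank_add_single_last, rank_add_single_last, hu, hv, hvb] at this

end Rank

def MacaulayBound (d : ℕ → ℕ) : Prop :=
  ∀ i : ℕ, 1 ≤ i → d (i + 1) ≤ macaulay i (d i)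

section Segment

variable {n : ℕ} {d : ℕ → ℕ}

variable (d) in
def segment : Set (Fin n → ℕ) := {u | rank u < d (deg u)}

lemma mem_segment {u : Fin n → ℕ} : u ∈ segment d ↔ rank u < d (deg u) := Iff.rfl

instance : DecidablePred (· ∈ (segment d : Set (Fin n → ℕ))) :=
  fun _ => decidable_of_iff' _ mem_segment

lemma notMem_segment_of_toLex_le {u v : Fin n → ℕ} (hu : u ∉ segment d) (hdeg : deg u = deg v)
    (h : toLex u ≤ toLex v) : v ∉ segment d := by
  simp only [mem_segment, not_lt] at hu ⊢
  exact hdeg ▸ hu.trans (rank_le_rank_of_toLex_le hdeg h)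

lemma ne_zero_of_notMem_segment (h0 : 0 < d 0) {u : Fin n → ℕ} (hu : u ∉ segment d) :
    u ≠ 0 := by
  rintro rfl
  exact hu (by simpa [segment, rank_eq_zero, deg] using h0)

lemma toLex_single_last_le (m : ℕ) (j : Fin (m + 1)) :
    toLex (Pi.single (Fin.last m) 1 : Fin (m + 1) → ℕ) ≤ toLex (Pi.single j 1) := by
  rcases (Fin.le_last j).lt_or_eq with hj | rfl
  · refine (show toLex (Pi.single (Fin.last m) 1 : Fin (m + 1) → ℕ) <
      toLex (Pi.single j 1) from ⟨j, fun k hk => ?_, ?_⟩).le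
    · simp [hk.ne, (hk.trans hj).ne]
    · simp [hj.ne]
  · exact le_rfl

lemma add_single_notMem_segment (hd : MacaulayBound d) (h0 : 0 < d 0) {u : Fin n → ℕ}
    (hu : u ∉ segment d) (j : Fin n) : u + Pi.single j 1 ∉ segment d := by
  have hdeg : 1 ≤ deg u := Nat.one_le_iff_ne_zero.mpr
    (deg_eq_zero_iff.not.mpr (ne_zero_of_notMem_segment h0 hu))
  obtain ⟨m, rfl⟩ : ∃ m, n = m + 1 := ⟨n - 1, by have := j.pos; omega⟩
  have hlast : u + Pi.single (Fin.last m) 1 ∉ segment d := by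
    simp only [mem_segment, not_lt] at hu ⊢
    calc d (deg (u + Pi.single (Fin.last m) 1)) ≤ macaulay (deg u) (d (deg u)) := by
          rw [deg_add, deg_single]; exact hd _ hdeg
      _ ≤ macaulay (deg u) (rank u) := macaulay_mono _ hu
      _ = rank (u + Pi.single (Fin.last m) 1) := (rank_add_single_last u).symm
  exact notMem_segment_of_toLex_le hlast (by simp [deg_add, deg_single])
    (add_le_add_right (toLex_single_last_le m j) (toLex u))

lemma add_notMem_segment (hd : MacaulayBound d) (h0 : 0 < d 0) {u : Fin n → ℕ}
    (hu : u ∉ segment d) (v : Fin n → ℕ) : u + v ∉ segment d := by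
  induction v using Pi.single_induction generalizing u with
  | zero => simpa using hu
  | add v w hv hw => simpa only [add_assoc] using hw (hv hu)
  | single j m =>
    induction m generalizing u with
    | zero => simpa using hu
    | succ m ih =>
      simpa only [Pi.single_add, add_assoc] using
        add_single_notMem_segment hd h0 (ih hu) j

lemma exists_mem_segment_add_single_eq (hd : MacaulayBound d) (h0 : 0 < d 0) {z : Fin n → ℕ}
    (hz : z ∈ segment d) (hz0 : z ≠ 0) :
    ∃ x ∈ segment d, ∃ j, x + Pi.single j 1 = z := by
  obtain ⟨j, hj⟩ := Function.ne_iff.mp hz0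
  have hle : Pi.single j 1 ≤ z := fun i => by
    by_cases hi : i = j
    · subst hi; simpa [Nat.one_le_iff_ne_zero] using hj
    · simp [hi]
  have hxz : z - Pi.single j 1 + Pi.single j 1 = z := tsub_add_cancel_of_le hle
  refine ⟨z - Pi.single j 1, ?_, j, hxz⟩
  by_contra hx
  exact add_single_notMem_segment hd h0 hx j (by rwa [hxz])

end Segment

section Shift

variable {n : ℕ} {u v : Fin n → ℕ}

noncomputable def leadIdx (u : Fin n → ℕ) : ℕ := sInf {i | ∃ h : i < n, u ⟨i, h⟩ ≠ 0}

lemma apply_eq_zero_of_lt_leadIdx {i : Fin n} (hi : i.val < leadIdx u) : u i = 0 := by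
  by_contra h
  exact Nat.notMem_of_lt_sInf hi ⟨i.isLt, h⟩

lemma leadIdx_le {i : Fin n} (hi : u i ≠ 0) : leadIdx u ≤ i.val :=
  Nat.sInf_le ⟨i.isLt, hi⟩

lemma exists_apply_leadIdx_ne_zero (hu : u ≠ 0) :
    ∃ h : leadIdx u < n, u ⟨leadIdx u, h⟩ ≠ 0 := by
  obtain ⟨i, hi⟩ := Function.ne_iff.mp hu
  exact Nat.sInf_mem (s := {i | ∃ h : i < n, u ⟨i, h⟩ ≠ 0}) ⟨i.val, i.isLt, hi⟩

lemma leadIdx_add (hu : u ≠ 0) (hv : ∀ i : Fin n, i.val < leadIdx u → v i = 0) :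
    leadIdx (u + v) = leadIdx u := by
  obtain ⟨hlt, hne⟩ := exists_apply_leadIdx_ne_zero hu
  have huv : u + v ≠ 0 := fun h0 => hne (Nat.add_eq_zero_iff.mp (congrFun h0 ⟨_, hlt⟩)).1
  refine le_antisymm (leadIdx_le (i := ⟨_, hlt⟩) (by simp [hne])) (not_lt.mp fun h => ?_)
  obtain ⟨hlt', hne'⟩ := exists_apply_leadIdx_ne_zero huv
  exact hne' (by
    simp [apply_eq_zero_of_lt_leadIdx (u := u) (i := ⟨_, hlt'⟩) h, hv ⟨_, hlt'⟩ h])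

noncomputable def shift (u : Fin n → ℕ) : Fin n → ℕ := fun i =>
  if i.val = leadIdx u then u i - 1 else if i.val = leadIdx u + 1 then u i + 1 else u i

lemma shift_apply_of_lt {i : Fin n} (hi : i.val < leadIdx u) : shift u i = 0 := by
  simp [shift, hi.ne, (hi.trans (Nat.lt_succ_self _)).ne, apply_eq_zero_of_lt_leadIdx hi]

lemma shift_add (hu : u ≠ 0) (hv : ∀ i : Fin n, i.val < leadIdx u → v i = 0) :
    shift (u + v) = shift u + v := by
  obtain ⟨hlt, hne⟩ := exists_apply_leadIdx_ne_zero hu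
  ext i
  by_cases h : i.val = leadIdx u
  · obtain rfl : i = ⟨_, hlt⟩ := Fin.ext h
    simp only [shift, leadIdx_add hu hv, Pi.add_apply, if_true]
    omega
  · simp only [shift, leadIdx_add hu hv, Pi.add_apply, h, if_false]
    split_ifs <;> omega

lemma deg_shift (hu : u ≠ 0) (hn : leadIdx u + 1 < n) : deg (shift u) = deg u := by
  obtain ⟨hlt, hne⟩ := exists_apply_leadIdx_ne_zero hu
  have key : shift u + Pi.single ⟨_, hlt⟩ 1 = u + Pi.single ⟨_, hn⟩ 1 := by
    ext i
    by_cases h : i.val = leadIdx u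
    · obtain rfl : i = ⟨_, hlt⟩ := Fin.ext h
      simp only [shift, Pi.add_apply, Pi.single_apply, Fin.ext_iff, if_true]
      split_ifs <;> omega
    · simp only [shift, Pi.add_apply, Pi.single_apply, Fin.ext_iff, h, if_false]
      split_ifs <;> omega
  simpa [deg_add, deg_single] using congrArg deg key

lemma toLex_shift_lt (hu : u ≠ 0) : toLex (shift u) < toLex u := by
  obtain ⟨hlt, hne⟩ := exists_apply_leadIdx_ne_zero hu
  refine ⟨⟨_, hlt⟩, fun j hj => ?_, ?_⟩
  · simp [shift_apply_of_lt (u := u) hj, apply_eq_zero_of_lt_leadIdx (u := u) hj]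
  · simp only [shift, Pi.toLex_apply, if_true]
    omega

end Shift

section NormalForm

variable {n : ℕ} {d : ℕ → ℕ}

lemma leadIdx_add_one_lt_of_notMem_segment (hpos : ∀ i : ℕ, 1 ≤ d i) {u : Fin n → ℕ}
    (hu : u ∉ segment d) : leadIdx u + 1 < n := by
  by_contra! h
  refine hu (mem_segment.mpr ?_)
  rw [rank_eq_zero fun i hi => apply_eq_zero_of_lt_leadIdx (by omega)]
  exact hpos _

lemma rank_shift_lt (hpos : ∀ i : ℕ, 1 ≤ d i) {u : Fin n → ℕ} (hu : u ∉ segment d) :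
    rank (shift u) < rank u :=
  have hu0 := ne_zero_of_notMem_segment (hpos 0) hu
  rank_lt_rank_of_toLex_lt (deg_shift hu0 (leadIdx_add_one_lt_of_notMem_segment hpos hu))
    (toLex_shift_lt hu0)

variable (d) in
/-- The last branch is never taken when every `d i` is positive (`rank_shift_lt`); it only makes
the recursion well founded. -/
noncomputable def normalForm (u : Fin n → ℕ) : Fin n → ℕ :=
  if u ∈ segment d then u
  else if rank (shift u) < rank u then normalForm (shift u) else u
termination_by rank u

lemma normalForm_of_mem {u : Fin n → ℕ} (hu : u ∈ segment d) : normalForm d u = u := by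
  rw [normalForm, if_pos hu]

lemma normalForm_of_notMem (hpos : ∀ i : ℕ, 1 ≤ d i) {u : Fin n → ℕ}
    (hu : u ∉ segment d) : normalForm d u = normalForm d (shift u) := by
  rw [normalForm, if_neg hu, if_pos (rank_shift_lt hpos hu)]

lemma shift_induction (hpos : ∀ i : ℕ, 1 ≤ d i) {P : (Fin n → ℕ) → Prop}
    (mem : ∀ u ∈ segment d, P u) (step : ∀ u ∉ segment d, P (shift u) → P u)
    (u : Fin n → ℕ) : P u := by
  induction hr : rank u using Nat.strong_induction_on generalizing u with
  | _ r ih =>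
    by_cases hu : u ∈ segment d
    · exact mem u hu
    · exact step u hu (ih _ (hr ▸ rank_shift_lt hpos hu) _ rfl)

lemma normalForm_mem (hpos : ∀ i : ℕ, 1 ≤ d i) (u : Fin n → ℕ) :
    normalForm d u ∈ segment d := by
  induction u using shift_induction hpos with
  | mem u hu => rwa [normalForm_of_mem hu]
  | step u hu ih => rwa [normalForm_of_notMem hpos hu]

lemma deg_normalForm (hpos : ∀ i : ℕ, 1 ≤ d i) (u : Fin n → ℕ) :
    deg (normalForm d u) = deg u := by
  induction u using shift_induction hpos with
  | mem u hu => rw [normalForm_of_mem hu]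
  | step u hu ih =>
    rw [normalForm_of_notMem hpos hu, ih, deg_shift (ne_zero_of_notMem_segment (hpos 0) hu)
      (leadIdx_add_one_lt_of_notMem_segment hpos hu)]

lemma shift_add_notMem_segment (hpos : ∀ i : ℕ, 1 ≤ d i) (hd : MacaulayBound d)
    {u v : Fin n → ℕ} (hu : u ∉ segment d) (hv0 : v ≠ 0) (hvu : leadIdx v < leadIdx u) :
    shift u + v ∉ segment d := by
  have hu0 := ne_zero_of_notMem_segment (hpos 0) hu
  have hlead := leadIdx_add_one_lt_of_notMem_segment hpos hu
  obtain ⟨m, rfl⟩ : ∃ m, n = m + 1 := ⟨n - 1, by omega⟩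
  obtain ⟨hvlt, hvne⟩ := exists_apply_leadIdx_ne_zero hv0
  have hne_last (j : Fin (m + 1)) (hj : j.val ≤ leadIdx v) : j ≠ Fin.last m :=
    fun h => by simp [Fin.ext_iff] at h; omega
  -- Compared at `leadIdx v`, `shift u + v` is lex-above `u + (deg v) • e_last`, which lies
  -- outside the segment because its complement is an ideal.
  refine notMem_segment_of_toLex_le (add_notMem_segment hd (hpos 0) hu
      (Pi.single (Fin.last m) (deg v)))
    (by rw [deg_add, deg_add, deg_single, deg_shift hu0 hlead])
    (show toLex (u + Pi.single (Fin.last m) (deg v)) < toLex (shift u + v) from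
      ⟨⟨_, hvlt⟩, fun j hj => ?_, ?_⟩).le
  · have hj : j.val < leadIdx v := hj
    simp [apply_eq_zero_of_lt_leadIdx (u := u) (hj.trans hvu), shift_apply_of_lt (hj.trans hvu),
      apply_eq_zero_of_lt_leadIdx (u := v) hj, hne_last j hj.le]
  · simpa [apply_eq_zero_of_lt_leadIdx (u := u) (i := ⟨_, hvlt⟩) hvu,
      shift_apply_of_lt (u := u) (i := ⟨_, hvlt⟩) hvu, hne_last ⟨_, hvlt⟩ le_rfl]
      using Nat.pos_of_ne_zero hvne

lemma normalForm_add_shift (hpos : ∀ i : ℕ, 1 ≤ d i) (hd : MacaulayBound d)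
    {u : Fin n → ℕ} (hu : u ∉ segment d) (v : Fin n → ℕ) :
    normalForm d (u + v) = normalForm d (shift u + v) := by
  have hu0 := ne_zero_of_notMem_segment (hpos 0) hu
  have huv : u + v ∉ segment d := add_notMem_segment hd (hpos 0) hu v
  induction hr : rank v using Nat.strong_induction_on generalizing v with
  | _ r ih =>
  by_cases hv : ∀ i : Fin n, i.val < leadIdx u → v i = 0
  · rw [normalForm_of_notMem hpos huv, shift_add hu0 hv]
  push Not at hv
  obtain ⟨i, hi, hvi⟩ := hv
  have hv0 : v ≠ 0 := fun h => hvi (by simp [h])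
  have hvu : leadIdx v < leadIdx u := (leadIdx_le hvi).trans_lt hi
  have hrv : rank (shift v) < r := hr ▸ rank_lt_rank_of_toLex_lt
    (deg_shift hv0 (by have := leadIdx_add_one_lt_of_notMem_segment hpos hu; omega))
    (toLex_shift_lt hv0)
  calc normalForm d (u + v) = normalForm d (shift (v + u)) := by
        rw [normalForm_of_notMem hpos huv, add_comm]
    _ = normalForm d (u + shift v) := by
        rw [shift_add hv0 fun i hi => apply_eq_zero_of_lt_leadIdx (hi.trans hvu), add_comm]
    _ = normalForm d (shift u + shift v) :=
        ih _ hrv _ (add_notMem_segment hd (hpos 0) hu _) rfl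
    _ = normalForm d (shift (v + shift u)) := by
        rw [shift_add hv0 fun i hi => shift_apply_of_lt (hi.trans hvu), add_comm]
    _ = normalForm d (shift u + v) := by
        rw [add_comm, ← normalForm_of_notMem hpos (shift_add_notMem_segment hpos hd hu hv0 hvu)]

lemma normalForm_normalForm_add (hpos : ∀ i : ℕ, 1 ≤ d i) (hd : MacaulayBound d)
    (u v : Fin n → ℕ) :
    normalForm d (normalForm d u + v) = normalForm d (u + v) := by
  induction u using shift_induction hpos generalizing v with
  | mem u hu => rw [normalForm_of_mem hu]
  | step u hu ih => rw [normalForm_of_notMem hpos hu, ih, normalForm_add_shift hpos hd hu]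

end NormalForm

section Semigroup

variable {d : ℕ → ℕ}

noncomputable abbrev segmentAddCommSemigroup {n : ℕ} (hpos : ∀ i : ℕ, 1 ≤ d i)
    (hd : MacaulayBound d) : AddCommSemigroup (segment d : Set (Fin n → ℕ)) where
  add x y := ⟨normalForm d (x.1 + y.1), normalForm_mem hpos _⟩
  add_assoc x y z := Subtype.ext <| by
    change normalForm d (normalForm d (x.1 + y.1) + z.1) =
      normalForm d (x.1 + normalForm d (y.1 + z.1))
    rw [normalForm_normalForm_add hpos hd, add_comm x.1 (normalForm d _),
      normalForm_normalForm_add hpos hd]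
    ac_rfl
  add_comm x y := Subtype.ext <| by
    change normalForm d (x.1 + y.1) = normalForm d (y.1 + x.1)
    rw [add_comm]

variable (d) in
def layer (n h : ℕ) : Set (segment d : Set (Fin n → ℕ)) := {x | deg x.1 = h}

lemma natCard_layer {n h : ℕ} (hh : d h ≤ n.multichoose h) : Nat.card (layer d n h) = d h := by
  let f (x : layer d n h) : Fin (d h) :=
    ⟨rank x.1.1, lt_of_lt_of_eq (mem_segment.mp x.1.2) (congrArg d x.2)⟩
  have hf : Function.Bijective f := by
    refine ⟨fun x y hxy => ?_, fun a => ?_⟩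
    · exact Subtype.ext (Subtype.ext
        (eq_of_rank_eq (x.2.trans y.2.symm) (congrArg Fin.val hxy)))
    · obtain ⟨u, hu, hr⟩ := exists_deg_rank_eq (a.2.trans_le hh)
      exact ⟨⟨⟨u, mem_segment.mpr (by rw [hu, hr]; exact a.2)⟩, hu⟩, Fin.ext hr⟩
  rw [Nat.card_eq_of_bijective f hf, Nat.card_eq_fintype_card, Fintype.card_fin]

lemma le_multichoose_of_macaulayBound (hpos : ∀ i : ℕ, 1 ≤ d i) (hd : MacaulayBound d) :
    ∀ h, 1 ≤ h → d h ≤ (d 1).multichoose h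
  | 1, _ => by simp
  | h + 2, _ =>
    calc d (h + 2) ≤ macaulay (h + 1) (d (h + 1)) := hd _ (by omega)
      _ ≤ macaulay (h + 1) ((d 1).multichoose (h + 1)) :=
        macaulay_mono _ (le_multichoose_of_macaulayBound hpos hd (h + 1) (by omega))
      _ = (d 1).multichoose (h + 2) := macaulay_multichoose (hpos 1) (by omega)

lemma single_mem_segment (j : Fin (d 1)) : (Pi.single j 1 : Fin (d 1) → ℕ) ∈ segment d := by
  simpa [mem_segment, deg_single] using rank_lt_multichoose (Pi.single j 1 : Fin (d 1) → ℕ)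

lemma iterSumset_layer_one (hpos : ∀ i : ℕ, 1 ≤ d i) (hd : MacaulayBound d) (k : ℕ) :
    @iterSumset _ (segmentAddCommSemigroup hpos hd) (layer d (d 1) 1) (k + 1) =
      layer d (d 1) (k + 1) := by
  let _ := segmentAddCommSemigroup (n := d 1) hpos hd
  induction k with
  | zero => rfl
  | succ k ih =>
    change iterSumset _ (k + 1) + _ = _
    rw [ih]
    ext z
    simp only [Set.mem_add, layer, Set.mem_ofPred_eq]
    constructor
    · rintro ⟨x, hx, y, hy, rfl⟩
      change deg (normalForm d (x.1 + y.1)) = _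
      rw [deg_normalForm hpos, deg_add, hx, hy]
    · intro hz
      obtain ⟨x, hx, j, hxz⟩ := exists_mem_segment_add_single_eq hd (hpos 0) z.2
        (deg_eq_zero_iff.not.mp (by omega))
      refine ⟨⟨x, hx⟩, ?_, ⟨_, single_mem_segment j⟩, deg_single j 1, Subtype.ext ?_⟩
      · rw [← hxz, deg_add, deg_single] at hz
        exact Nat.add_right_cancel hz
      · change normalForm d (x + Pi.single j 1) = z.1
        rw [hxz, normalForm_of_mem z.2]

end Semigroup

end MacaulaySemigroup

open MacaulaySemigroup in
theorem stmt16_general (d : ℕ → ℕ) (hpos : ∀ i : ℕ, 1 ≤ d i)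
    (hd : ∀ i : ℕ, 1 ≤ i → d (i + 1) ≤ macaulay i (d i)) :
    ∃ (G : Type) (iG : AddCommSemigroup G) (A : Set G), A.Finite ∧
      ∀ h : ℕ, 1 ≤ h → Nat.card (@iterSumset G iG A h) = d h := by
  have hcard (h : ℕ) (hh : 1 ≤ h) : Nat.card (layer d (d 1) h) = d h :=
    natCard_layer (le_multichoose_of_macaulayBound hpos hd h hh)
  refine ⟨segment d, segmentAddCommSemigroup hpos hd, layer d (d 1) 1, ?_, fun h hh => ?_⟩
  · refine Set.finite_coe_iff.mp (Nat.finite_of_card_ne_zero ?_)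
    rw [hcard 1 le_rfl]
    exact Nat.one_le_iff_ne_zero.mp (hpos 1)
  · obtain ⟨k, rfl⟩ : ∃ k, h = k + 1 := ⟨h - 1, by omega⟩
    rw [iterSumset_layer_one hpos hd, hcard _ hh]

/-- Sharp realization (main theorem). Let `(d_i)_{i≥0}` be a sequence of positive
integers with `d_0 = 1` and `1 ≤ d_{i+1} ≤ d_i^⟨i⟩` for all `i ≥ 1`. Then there exists
an abelian semigroup `G` and a finite subset `A ⊆ G` such that `d_h = |hA|` for all
`h ≥ 1` (for `h = 0`, `0A` is a singleton, matching `d_0 = 1`). -/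
theorem stmt16 (d : ℕ → ℕ) (hpos : ∀ i : ℕ, 1 ≤ d i) (hd0 : d 0 = 1)
    (hd : ∀ i : ℕ, 1 ≤ i → d (i + 1) ≤ macaulay i (d i)) :
    ∃ (G : Type) (iG : AddCommSemigroup G) (A : Set G), A.Finite ∧
      ∀ h : ℕ, 1 ≤ h → Nat.card (@iterSumset G iG A h) = d h :=
  stmt16_general d hpos hd
end

section
/- Let A be a nonempty finite subset of an abelian group (G,+) containing 0, and suppose |hA| = |(h+1)A| for some h ≥ 1. Then hA is a subgroup of G, and hA = h'A (hence |h'A| = |hA|) for all h' ≥ h. -/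
open scoped Pointwise

section Aux

variable {G : Type*} [AddCommGroup G] (A : Set G)

lemma iterSumset_succ (h : ℕ) (hh : 1 ≤ h) :
    iterSumset A (h + 1) = iterSumset A h + A := by
  match h, hh with
  | k + 1, _ => rfl

lemma iterSumset_finite (hfin : A.Finite) : ∀ h, (iterSumset A h).Finite
  | 0 => hfin
  | 1 => hfin
  | h + 2 => ((iterSumset_finite hfin (h + 1)).add hfin : _)

lemma iterSumset_zero_mem (h0 : (0 : G) ∈ A) : ∀ h, (0 : G) ∈ iterSumset A h
  | 0 => h0
  | 1 => h0
  | h + 2 => by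
      have := Set.add_mem_add (iterSumset_zero_mem h0 (h + 1)) h0
      simp only [add_zero] at this
      exact this

lemma iterSumset_subset_succ (h0 : (0 : G) ∈ A) (h : ℕ) (hh : 1 ≤ h) :
    iterSumset A h ⊆ iterSumset A (h + 1) := by
  rw [iterSumset_succ A h hh]
  intro x hx
  simpa using Set.add_mem_add hx h0

lemma iterSumset_add (m : ℕ) (hm : 1 ≤ m) :
    ∀ n, 1 ≤ n → iterSumset A (m + n) = iterSumset A m + iterSumset A n := by
  intro n hn
  induction n with
  | zero => omega
  | succ k ih =>
    rcases Nat.eq_or_lt_of_le hn with h1 | h1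
    · -- k + 1 = 1, i.e. k = 0
      have hk : k = 0 := by omega
      subst hk
      rw [iterSumset_succ A m hm]
      rfl
    · have hk : 1 ≤ k := by omega
      have : m + (k + 1) = (m + k) + 1 := by ring
      rw [this, iterSumset_succ A (m + k) (by omega), ih hk,
        iterSumset_succ A k hk, add_assoc]

end Aux

/-- Let `A` be a nonempty finite subset of an abelian group `(G,+)` containing `0`, and
suppose `|hA| = |(h+1)A|` for some `h ≥ 1`. Then `hA` is a subgroup of `G`, and
`hA = h'A` (hence `|h'A| = |hA|`) for all `h' ≥ h`. -/
theorem stmt17 {G : Type*} [AddCommGroup G] (A : Set G) (hfin : A.Finite)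
    (h0 : (0 : G) ∈ A) (h : ℕ) (hh : 1 ≤ h)
    (hcard : Nat.card (iterSumset A h) = Nat.card (iterSumset A (h + 1))) :
    (∃ H : AddSubgroup G, iterSumset A h = (H : Set G)) ∧
      ∀ h' : ℕ, h ≤ h' →
        iterSumset A h' = iterSumset A h ∧
          Nat.card (iterSumset A h') = Nat.card (iterSumset A h) := by
  set S := iterSumset A h with hS
  -- stabilization at h+1
  have hfinS : S.Finite := iterSumset_finite A hfin h
  have hfinS1 : (iterSumset A (h + 1)).Finite := iterSumset_finite A hfin (h + 1)
  have hsub : S ⊆ iterSumset A (h + 1) := iterSumset_subset_succ A h0 h hh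
  have hstab : iterSumset A (h + 1) = S := by
    have hc : (iterSumset A (h + 1)).ncard ≤ S.ncard := by
      rw [← Nat.card_coe_set_eq, ← Nat.card_coe_set_eq, hcard]
    exact (Set.eq_of_subset_of_ncard_le hsub hc hfinS1).symm
  -- all higher sumsets equal S
  have hall : ∀ h', h ≤ h' → iterSumset A h' = S := by
    intro h' hh'
    induction h', hh' using Nat.le_induction with
    | base => rfl
    | succ n hn ih =>
      rw [iterSumset_succ A n (le_trans hh hn), ih, ← iterSumset_succ A h hh, hstab]
  -- closure under addition
  have hSS : S + S = S := by
    rw [← iterSumset_add A h hh h hh, hall (h + h) (by omega)]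
  have hzero : (0 : G) ∈ S := iterSumset_zero_mem A h0 h
  have haddmem : ∀ {x y : G}, x ∈ S → y ∈ S → x + y ∈ S := by
    intro x y hx hy
    rw [← hSS]; exact Set.add_mem_add hx hy
  -- multiples stay in S
  have hsmul : ∀ {x : G}, x ∈ S → ∀ n : ℕ, (n + 1) • x ∈ S := by
    intro x hx n
    induction n with
    | zero => simpa using hx
    | succ k ih =>
      have : (k + 1 + 1) • x = (k + 1) • x + x := by
        rw [add_nsmul, one_nsmul]
      rw [this]; exact haddmem ih hx
  -- closure under negation
  have hneg : ∀ {x : G}, x ∈ S → -x ∈ S := by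
    intro x hx
    have : Finite S := hfinS
    obtain ⟨a, b, hab, heq⟩ := Finite.exists_ne_map_eq_of_infinite
      (fun n : ℕ => (⟨(n + 1) • x, hsmul hx n⟩ : S))
    have heq' : (a + 1) • x = (b + 1) • x := by
      simpa using congrArg Subtype.val heq
    clear heq
    wlog hlt : a < b generalizing a b
    · exact this b a hab.symm heq'.symm (by omega)
    set k := b - a with hk
    have hk1 : 1 ≤ k := by omega
    have hkx : k • x = 0 := by
      have : (a + 1) • x + k • x = (b + 1) • x := by
        rw [← add_nsmul]; congr 1; omega
      rw [heq'] at this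
      exact add_eq_left.mp this
    rcases Nat.eq_or_lt_of_le hk1 with h1 | h1
    · have : x = 0 := by simpa [← h1] using hkx
      rw [this, neg_zero]; exact hzero
    · have hx' : -x = (k - 1) • x := by
        have : (k - 1) • x + x = k • x := by
          rw [← succ_nsmul]; congr 1; omega
        rw [hkx] at this
        exact (neg_eq_of_add_eq_zero_left this)
      rw [hx']
      have : k - 1 = (k - 2) + 1 := by omega
      rw [this]; exact hsmul hx (k - 2)
  exact ⟨⟨{ carrier := S
            add_mem' := fun ha hb => haddmem ha hb
            zero_mem' := hzero
            neg_mem' := fun hx => hneg hx }, rfl⟩,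
    fun h' hh' => ⟨hall h' hh', by rw [hall h' hh']⟩⟩
end

section
/- Let A be a nonempty finite subset of an abelian group (G,+) with |A| = |A + A|. Then A is a translate of a subgroup of G of cardinality |A|; that is, there exist x ∈ G and a finite subgroup H ≤ G with |H| = |A| and A = x + H. -/
open scoped Pointwise

/-- Let `A` be a nonempty finite subset of an abelian group `(G,+)` with `|A| = |A + A|`.
Then `A` is a translate of a subgroup of `G` of cardinality `|A|`: there exist `x ∈ G`
and a finite subgroup `H ≤ G` with `|H| = |A|` and `A = x + H`. -/
theorem stmt18 {G : Type*} [AddCommGroup G] (A : Set G) (hfin : A.Finite)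
    (hne : A.Nonempty) (hcard : Nat.card A = Nat.card (A + A : Set G)) :
    ∃ (x : G) (H : AddSubgroup G), (H : Set G).Finite ∧ Nat.card H = Nat.card A ∧
      A = (fun h => x + h) '' (H : Set G) := by
  obtain ⟨a, ha⟩ := hne
  have hAA : (A + A : Set G).Finite := hfin.add hfin
  have key : ∀ b ∈ A, b +ᵥ A = A + A := by
    intro b hb
    apply Set.eq_of_subset_of_ncard_le
    · rintro _ ⟨x, hx, rfl⟩
      exact Set.add_mem_add hb hx
    · rw [Set.ncard_vadd_set, ← Nat.card_coe_set_eq, ← Nat.card_coe_set_eq, ← hcard]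
    · exact hAA
  have hsub : A - A = (-a) +ᵥ A := by
    ext z
    constructor
    · rintro ⟨x, hx, y, hy, rfl⟩
      have : a + x ∈ y +ᵥ A := by
        rw [key y hy, ← key a ha]; exact ⟨x, hx, rfl⟩
      obtain ⟨u, hu, huv⟩ := this
      refine ⟨u, hu, ?_⟩
      show -a + u = x - y
      have huv' : u + y = a + x := by rw [add_comm]; exact huv
      rw [show u = a + x - y from eq_sub_of_add_eq huv']
      abel
    · rintro ⟨u, hu, rfl⟩
      exact ⟨u, hu, a, ha, by show u - a = -a + u; abel⟩
  refine ⟨a, {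
    carrier := A - A
    zero_mem' := ⟨a, ha, a, ha, by simp⟩
    add_mem' := ?_
    neg_mem' := ?_ }, ?_, ?_, ?_⟩
  · rintro p q ⟨x, hx, y, hy, rfl⟩ ⟨z, hz, w, hw, rfl⟩
    have : x + z ∈ y +ᵥ A := by
      rw [key y hy]; exact Set.add_mem_add hx hz
    obtain ⟨u, hu, huv⟩ := this
    have huv' : y + u = x + z := huv
    refine ⟨u, hu, w, hw, ?_⟩
    show u - w = (x - y) + (z - w)
    rw [show u = -y + (x + z) from by rw [← huv']; abel]
    abel
  · rintro p ⟨x, hx, y, hy, rfl⟩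
    exact ⟨y, hy, x, hx, by show y - x = -(x - y); abel⟩
  · show (A - A).Finite
    exact hfin.sub hfin
  · show Nat.card (A - A : Set G) = Nat.card A
    rw [Nat.card_coe_set_eq, Nat.card_coe_set_eq, hsub, Set.ncard_vadd_set]
  · show A = (fun h => a + h) '' (A - A)
    rw [hsub]
    ext z
    constructor
    · intro hz
      exact ⟨-a + z, ⟨z, hz, rfl⟩, by show a + (-a + z) = z; abel⟩
    · rintro ⟨_, ⟨u, hu, rfl⟩, rfl⟩
      simpa using hu
end
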